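/- arXiv:0910.0688 — 3 statements merged into one kernel-verified Lean document; each statement's English description precedes it below -/
import Mathlib

section
/- Let $U$ be an associative algebra over a field $\mathbb{F}$ of characteristic zero, $f \in U$ invertible with $\mathrm{ad}(f)$ locally nilpotent on $U$. For $x \in \mathbb{F}$ define $\Theta_x(u) = \sum_{i \geq 0} \binom{x}{i} \mathrm{ad}(f)^i(u) f^{-i}$ (a finite sum). Then $\Theta_x$ is an algebra automorphism of $U$, $\Theta_x \circ \Theta_y = \Theta_{x+y}$ for all $x, y \in \mathbb{F}$, and for $n \in \mathbb{Z}$, $\Theta_n(u) = f^n u f^{-n}$. -/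
open Finset Polynomial

section Aux

variable {F : Type*} [Field F] [CharZero F]

private lemma natCast_roots_zero (P : Polynomial F)
    (h : ∀ n : ℕ, P.eval (n : F) = 0) : P = 0 := by
  apply P.eq_zero_of_infinite_isRoot
  apply (Set.infinite_range_of_injective (Nat.cast_injective (R := F))).mono
  rintro _ ⟨n, rfl⟩
  exact h n

private lemma polyfun_ext {U : Type*} [AddCommGroup U] [Module F U]
    {ι κ : Type*} (s : Finset ι) (t : Finset κ)
    (p : ι → Polynomial F) (c : ι → U) (q : κ → Polynomial F) (d : κ → U)
    (h : ∀ n : ℕ, ∑ i ∈ s, (p i).eval (n : F) • c i = ∑ j ∈ t, (q j).eval (n : F) • d j)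
    (x : F) :
    ∑ i ∈ s, (p i).eval x • c i = ∑ j ∈ t, (q j).eval x • d j := by
  rw [← sub_eq_zero, ← Module.forall_dual_apply_eq_zero_iff F]
  intro l
  have key : ∀ z : F, l ((∑ i ∈ s, (p i).eval z • c i) - ∑ j ∈ t, (q j).eval z • d j)
      = ((∑ i ∈ s, p i * C (l (c i))) - ∑ j ∈ t, q j * C (l (d j))).eval z := by
    intro z
    simp [map_sub, map_sum, map_smul, eval_finset_sum, smul_eq_mul]
  rw [key]
  have hP : ((∑ i ∈ s, p i * C (l (c i))) - ∑ j ∈ t, q j * C (l (d j))) = 0 := by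
    apply natCast_roots_zero
    intro n
    rw [← key, h n, sub_self, map_zero]
  rw [hP, eval_zero]

/-- the polynomial `(1/i!) * ∏_{j<i} (X + (y - j))`. -/
private noncomputable def binP (F : Type*) [Field F] (y : F) (i : ℕ) : Polynomial F :=
  Polynomial.C ((i.factorial : F))⁻¹ * ∏ j ∈ Finset.range i, (Polynomial.X + Polynomial.C (y - (j : F)))

private lemma binP_eval (y : F) (i : ℕ) (x : F) :
    (binP F y i).eval x = (∏ j ∈ Finset.range i, (x + y - (j : F))) / (i.factorial : F) := by
  rw [binP, eval_mul, eval_C, eval_prod]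
  rw [div_eq_mul_inv, mul_comm]
  congr 1
  refine Finset.prod_congr rfl fun j _ => ?_
  rw [eval_add, eval_X, eval_C]
  ring

private lemma binom_nat (n i : ℕ) :
    (∏ j ∈ Finset.range i, ((n : F) - (j : F))) / (i.factorial : F) = (n.choose i : F) := by
  have h1 : ∏ j ∈ Finset.range i, ((n : F) - (j : F)) = (n.descFactorial i : F) := by
    induction i with
    | zero => simp
    | succ i ih =>
      rw [Finset.prod_range_succ, ih, Nat.descFactorial_succ]
      by_cases h : i ≤ n
      · rw [Nat.cast_mul, Nat.cast_sub h]
        ring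
      · push_neg at h
        rw [Nat.descFactorial_eq_zero_iff_lt.mpr h]
        simp
  rw [h1, Nat.descFactorial_eq_factorial_mul_choose, Nat.cast_mul]
  rw [mul_comm, mul_div_assoc, div_self (Nat.cast_ne_zero.mpr i.factorial_ne_zero), mul_one]

private lemma binP_nat_eval (n i : ℕ) : (binP F 0 i).eval (n : F) = (n.choose i : F) := by
  rw [binP_eval]
  rw [show (∏ j ∈ Finset.range i, ((n : F) + 0 - (j : F)))
      = ∏ j ∈ Finset.range i, ((n : F) - (j : F)) from
    Finset.prod_congr rfl fun j _ => by ring]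
  exact binom_nat n i

end Aux

/- STATEMENT 10: Mathieu's generalized conjugation. For `f` invertible with `ad(f)`
locally nilpotent and `Θ_x(u) = ∑ᵢ binom(x,i) ad(f)ⁱ(u) f⁻ⁱ` (a finite sum,
characterized below by `hΘ`), `Θ_x` is an algebra automorphism of `U`,
`Θ_x ∘ Θ_y = Θ_{x+y}`, and `Θ_n(u) = fⁿ u f⁻ⁿ` for integer `n`. -/
theorem theta_is_automorphism {F U : Type*} [Field F] [CharZero F] [Ring U] [Algebra F U]
    (f g : U) (hfg : f * g = 1) (hgf : g * f = 1)
    (hnil : ∀ u : U, ∃ k : ℕ, (fun w => f * w - w * f)^[k] u = 0)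
    (Θ : F → U → U)
    (hΘ : ∀ (x : F) (u : U) (k : ℕ), (fun w => f * w - w * f)^[k] u = 0 →
      Θ x u = ∑ i ∈ Finset.range k,
        ((∏ j ∈ Finset.range i, (x - (j : F))) / (Nat.factorial i : F)) •
          ((fun w => f * w - w * f)^[i] u * g ^ i)) :
    (∀ x : F, Function.Bijective (Θ x) ∧ Θ x 1 = 1 ∧
      (∀ u v : U, Θ x (u * v) = Θ x u * Θ x v) ∧
      (∀ u v : U, Θ x (u + v) = Θ x u + Θ x v) ∧
      (∀ (c : F) (u : U), Θ x (c • u) = c • Θ x u)) ∧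
    (∀ (x y : F) (u : U), Θ x (Θ y u) = Θ (x + y) u) ∧
    (∀ (n : ℕ) (u : U), Θ (n : F) u = f ^ n * u * g ^ n ∧
      Θ (-(n : F)) u = g ^ n * u * f ^ n) := by
  classical
  set T : U →ₗ[F] U := LinearMap.mulLeft F f - LinearMap.mulRight F f with hTdef
  have hTapp : ∀ w, T w = f * w - w * f := fun w => rfl
  have hco : (fun w => f * w - w * f) = ⇑T := by funext w; rfl
  have hiter : ∀ (k : ℕ) (u : U), (fun w => f * w - w * f)^[k] u = (T ^ k) u := by
    intro k u
    rw [Module.End.pow_apply, hco]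
  -- restate hypotheses
  have hnil' : ∀ u : U, ∃ k : ℕ, (T ^ k) u = 0 := by
    intro u
    obtain ⟨k, hk⟩ := hnil u
    exact ⟨k, by rw [← hiter]; exact hk⟩
  have hΘp : ∀ (x : F) (u : U) (k : ℕ), (T ^ k) u = 0 →
      Θ x u = ∑ i ∈ Finset.range k, (binP F 0 i).eval x • ((T ^ i) u * g ^ i) := by
    intro x u k hk
    rw [hΘ x u k (by rw [hiter]; exact hk)]
    refine Finset.sum_congr rfl fun i _ => ?_
    rw [hiter, binP_eval]
    congr 2
    exact (Finset.prod_congr rfl fun j _ => by ring).symm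
  -- monotonicity of nilpotence
  have hmono : ∀ (u : U) (k : ℕ), (T ^ k) u = 0 → ∀ m, k ≤ m → (T ^ m) u = 0 := by
    intro u k hk m hm
    obtain ⟨d, rfl⟩ := Nat.exists_eq_add_of_le hm
    rw [add_comm, pow_add, Module.End.mul_apply, hk, map_zero]
  -- commutation of T with right multiplication by powers of g
  have hTg1 : ∀ w : U, T (w * g) = T w * g := by
    intro w
    rw [hTapp, hTapp, sub_mul]
    rw [mul_assoc w g f, hgf, mul_one, mul_assoc w f g, hfg, mul_one, mul_assoc]
  have hTgi : ∀ (w : U) (i : ℕ), T (w * g ^ i) = T w * g ^ i := by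
    intro w i
    induction i with
    | zero => simp
    | succ i ih =>
      rw [pow_succ, ← mul_assoc, hTg1, ih, mul_assoc]
  have hTkg : ∀ (w : U) (i k : ℕ), (T ^ k) (w * g ^ i) = (T ^ k) w * g ^ i := by
    intro w i k
    induction k with
    | zero => simp
    | succ k ih =>
      rw [pow_succ', Module.End.mul_apply, Module.End.mul_apply, ih, hTgi]
  -- power cancellation
  have hfgp : ∀ a b : ℕ, f ^ a * g ^ (a + b) = g ^ b := by
    intro a
    induction a with
    | zero => intro b; simp
    | succ a ih =>
      intro b
      rw [pow_succ, show a + 1 + b = 1 + (a + b) by ring, pow_add, pow_one,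
        mul_assoc, ← mul_assoc f g, hfg, one_mul, ih]
  have hgfp : ∀ a b : ℕ, g ^ a * f ^ (a + b) = f ^ b := by
    intro a
    induction a with
    | zero => intro b; simp
    | succ a ih =>
      intro b
      rw [pow_succ, show a + 1 + b = 1 + (a + b) by ring, pow_add, pow_one,
        mul_assoc, ← mul_assoc g f, hgf, one_mul, ih]
  have hfgn : ∀ n : ℕ, f ^ n * g ^ n = 1 := fun n => by simpa using hfgp n 0
  have hgfn : ∀ n : ℕ, g ^ n * f ^ n = 1 := fun n => by simpa using hgfp n 0
  have cancel1 : ∀ (n : ℕ) (X : U), g ^ n * (f ^ n * X) = X := fun n X => by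
    rw [← mul_assoc, hgfn, one_mul]
  -- the conjugation formula for natural powers
  have hLR : Commute (LinearMap.mulLeft F f) (LinearMap.mulRight F f) := by
    apply LinearMap.ext
    intro w
    simp [Module.End.mul_apply, mul_assoc]
  have hcomm : Commute (LinearMap.mulRight F f) T := by
    rw [hTdef]
    exact (hLR.symm).sub_right (Commute.refl _)
  have hL : LinearMap.mulLeft F f = LinearMap.mulRight F f + T := by
    rw [hTdef]; abel
  have conj : ∀ (n : ℕ) (u : U),
      f ^ n * u * g ^ n = ∑ i ∈ Finset.range (n + 1), ((n.choose i : ℕ) : F) • ((T ^ i) u * g ^ i) := by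
    intro n u
    have step1 : f ^ n * u = (LinearMap.mulLeft F f ^ n) u := by
      rw [LinearMap.pow_mulLeft]; rfl
    rw [step1, hL, Commute.add_pow hcomm, LinearMap.sum_apply, Finset.sum_mul]
    have step2 : ∀ m ∈ Finset.range (n + 1),
        ((LinearMap.mulRight F f ^ m * T ^ (n - m) * (n.choose m : Module.End F U)) u) * g ^ n
          = ((n.choose m : ℕ) : F) • ((T ^ (n - m)) u * g ^ (n - m)) := by
      intro m hm
      rw [Finset.mem_range, Nat.lt_succ_iff] at hm
      rw [Module.End.mul_apply, Module.End.mul_apply, Module.End.natCast_apply]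
      rw [map_nsmul, LinearMap.pow_mulRight, LinearMap.mulRight_apply]
      rw [smul_mul_assoc, smul_mul_assoc, mul_assoc]
      rw [show f ^ m * g ^ n = g ^ (n - m) from by
        conv_lhs => rw [show n = m + (n - m) from (Nat.add_sub_cancel' hm).symm]
        exact hfgp m (n - m)]
      rw [Nat.cast_smul_eq_nsmul]
    rw [Finset.sum_congr rfl step2]
    conv_rhs => rw [← Finset.sum_range_reflect]
    refine Finset.sum_congr rfl fun m hm => ?_
    rw [Finset.mem_range, Nat.lt_succ_iff] at hm
    rw [Nat.add_sub_cancel, Nat.choose_symm hm]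
  -- Θ at natural numbers
  have theta_nat : ∀ (n : ℕ) (u : U), Θ (n : F) u = f ^ n * u * g ^ n := by
    intro n u
    obtain ⟨k, hk⟩ := hnil' u
    rw [hΘp (n : F) u k hk, conj n u]
    have h1 : ∑ i ∈ Finset.range k, (binP F 0 i).eval (n : F) • ((T ^ i) u * g ^ i)
        = ∑ i ∈ Finset.range (max k (n + 1)), (binP F 0 i).eval (n : F) • ((T ^ i) u * g ^ i) := by
      apply Finset.sum_subset (Finset.range_subset_range.mpr (le_max_left _ _))
      intro i _ hi
      rw [Finset.mem_range, not_lt] at hi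
      rw [hmono u k hk i hi, zero_mul, smul_zero]
    have h2 : ∑ i ∈ Finset.range (n + 1), ((n.choose i : ℕ) : F) • ((T ^ i) u * g ^ i)
        = ∑ i ∈ Finset.range (max k (n + 1)), ((n.choose i : ℕ) : F) • ((T ^ i) u * g ^ i) := by
      apply Finset.sum_subset (Finset.range_subset_range.mpr (le_max_right _ _))
      intro i _ hi
      rw [Finset.mem_range, not_lt] at hi
      rw [Nat.choose_eq_zero_of_lt hi, Nat.cast_zero, zero_smul]
    rw [h1, h2]
    refine Finset.sum_congr rfl fun i _ => ?_
    rw [binP_nat_eval]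
  -- nilpotence of Θ-images
  have theta_nil : ∀ (x : F) (u : U) (k : ℕ), (T ^ k) u = 0 → (T ^ k) (Θ x u) = 0 := by
    intro x u k hk
    rw [hΘp x u k hk, map_sum]
    rw [Finset.sum_eq_zero]
    intro i _
    rw [map_smul, hTkg, ← Module.End.mul_apply, ← pow_add, hmono u k hk (k + i) le_self_add,
      zero_mul, smul_zero]
  -- Θ 0 = id
  have theta_zero : ∀ u : U, Θ 0 u = u := by
    intro u
    have := theta_nat 0 u
    simpa using this
  -- shift lemma for binP
  have hshift : ∀ (y : F) (i : ℕ) (z : F), (binP F 0 i).eval (z + y) = (binP F y i).eval z := by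
    intro y i z
    rw [binP_eval, binP_eval]
    congr 1
    exact Finset.prod_congr rfl fun j _ => by ring
  -- composition with a natural number on the left
  have hcompA : ∀ (m : ℕ) (y : F) (u : U), Θ (m : F) (Θ y u) = Θ ((m : F) + y) u := by
    intro m y u
    obtain ⟨k, hk⟩ := hnil' u
    have hky : (T ^ k) (Θ y u) = 0 := theta_nil y u k hk
    rw [theta_nat m (Θ y u)]
    have hLs : ∀ z : F, f ^ m * (∑ i ∈ Finset.range k, (binP F 0 i).eval z • ((T ^ i) u * g ^ i)) * g ^ m
        = ∑ i ∈ Finset.range k, (binP F 0 i).eval z • (f ^ m * ((T ^ i) u * g ^ i) * g ^ m) := by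
      intro z
      rw [Finset.mul_sum, Finset.sum_mul]
      exact Finset.sum_congr rfl fun i _ => by rw [mul_smul_comm, smul_mul_assoc]
    rw [hΘp y u k hk, hLs y, hΘp ((m : F) + y) u k hk]
    have hsh : ∀ (i : ℕ) (z : F), (binP F 0 i).eval ((m : F) + z) = (binP F (m : F) i).eval z := by
      intro i z
      rw [← hshift (m : F) i z, add_comm]
    simp only [hsh]
    refine polyfun_ext _ _ _ _ _ _ ?_ y
    intro n
    rw [← hLs (n : F), ← hΘp (n : F) u k hk]
    simp only [← hsh]
    rw [← hΘp ((m : F) + (n : F)) u k hk]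
    rw [theta_nat n u, show ((m : F) + (n : F)) = (((m + n : ℕ) : F)) by push_cast; ring]
    rw [theta_nat (m + n) u]
    rw [pow_add f m n, add_comm m n, pow_add g n m]
    simp only [mul_assoc]
  -- full composition law
  have hcomp : ∀ (x y : F) (u : U), Θ x (Θ y u) = Θ (x + y) u := by
    intro x y u
    obtain ⟨k, hk⟩ := hnil' u
    have hky : (T ^ k) (Θ y u) = 0 := theta_nil y u k hk
    rw [hΘp x (Θ y u) k hky, hΘp (x + y) u k hk]
    simp only [fun i => hshift y i x]
    refine polyfun_ext _ _ _ _ _ _ ?_ x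
    intro n
    rw [← hΘp (n : F) (Θ y u) k hky, hcompA n y u]
    rw [hΘp ((n : F) + y) u k hk]
    exact Finset.sum_congr rfl fun i _ => by rw [hshift y i (n : F)]
  -- Θ x 1 = 1
  have hone : ∀ x : F, Θ x 1 = 1 := by
    intro x
    have h1 : (T ^ 1) (1 : U) = 0 := by
      rw [pow_one, hTapp]
      simp
    rw [hΘp x 1 1 h1]
    simp [binP]
  -- multiplicativity
  have hmul : ∀ (x : F) (u v : U), Θ x (u * v) = Θ x u * Θ x v := by
    intro x u v
    obtain ⟨k₁, h₁⟩ := hnil' u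
    obtain ⟨k₂, h₂⟩ := hnil' v
    obtain ⟨k₃, h₃⟩ := hnil' (u * v)
    set K := max (max k₁ k₂) k₃ with hK
    have hu : (T ^ K) u = 0 := hmono u k₁ h₁ K (le_trans (le_max_left _ _) (le_max_left _ _))
    have hv : (T ^ K) v = 0 := hmono v k₂ h₂ K (le_trans (le_max_right _ _) (le_max_left _ _))
    have huv : (T ^ K) (u * v) = 0 := hmono (u * v) k₃ h₃ K (le_max_right _ _)
    have hprod : ∀ z : F, Θ z u * Θ z v
        = ∑ p ∈ Finset.range K ×ˢ Finset.range K, (binP F 0 p.1 * binP F 0 p.2).eval z •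
            (((T ^ p.1) u * g ^ p.1) * ((T ^ p.2) v * g ^ p.2)) := by
      intro z
      rw [hΘp z u K hu, hΘp z v K hv, Finset.sum_mul_sum, Finset.sum_product]
      refine Finset.sum_congr rfl fun i _ => Finset.sum_congr rfl fun j _ => ?_
      rw [smul_mul_smul_comm, eval_mul]
    rw [hΘp x (u * v) K huv, hprod x]
    refine polyfun_ext _ _ _ _ _ _ ?_ x
    intro n
    rw [← hΘp (n : F) (u * v) K huv, ← hprod (n : F), theta_nat n (u * v),
      theta_nat n u, theta_nat n v]
    simp only [mul_assoc]
    rw [cancel1]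
  -- additivity
  have hadd : ∀ (x : F) (u v : U), Θ x (u + v) = Θ x u + Θ x v := by
    intro x u v
    obtain ⟨k₁, h₁⟩ := hnil' u
    obtain ⟨k₂, h₂⟩ := hnil' v
    set K := max k₁ k₂
    have hu : (T ^ K) u = 0 := hmono u k₁ h₁ K (le_max_left _ _)
    have hv : (T ^ K) v = 0 := hmono v k₂ h₂ K (le_max_right _ _)
    have huv : (T ^ K) (u + v) = 0 := by rw [map_add, hu, hv, add_zero]
    rw [hΘp x u K hu, hΘp x v K hv, hΘp x (u + v) K huv, ← Finset.sum_add_distrib]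
    refine Finset.sum_congr rfl fun i _ => ?_
    rw [map_add, add_mul, smul_add]
  -- F-linearity
  have hsmul : ∀ (x : F) (c : F) (u : U), Θ x (c • u) = c • Θ x u := by
    intro x c u
    obtain ⟨k, hk⟩ := hnil' u
    have hcu : (T ^ k) (c • u) = 0 := by rw [map_smul, hk, smul_zero]
    rw [hΘp x u k hk, hΘp x (c • u) k hcu, Finset.smul_sum]
    refine Finset.sum_congr rfl fun i _ => ?_
    rw [map_smul, smul_mul_assoc, smul_comm]
  -- negative naturals
  have hneg : ∀ (n : ℕ) (u : U), Θ (-(n : F)) u = g ^ n * u * f ^ n := by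
    intro n u
    have h := hcomp (n : F) (-(n : F)) u
    rw [add_neg_cancel, theta_zero, theta_nat n (Θ (-(n : F)) u)] at h
    have cancel : ∀ W : U, g ^ n * (f ^ n * W * g ^ n) * f ^ n = W := by
      intro W
      simp only [mul_assoc]
      rw [hgfn, mul_one, cancel1]
    calc Θ (-(n : F)) u = g ^ n * (f ^ n * Θ (-(n : F)) u * g ^ n) * f ^ n := (cancel _).symm
      _ = g ^ n * u * f ^ n := by rw [h]
  -- bijectivity
  have hbij : ∀ x : F, Function.Bijective (Θ x) := by
    intro x
    apply Function.bijective_iff_has_inverse.mpr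
    refine ⟨Θ (-x), fun u => ?_, fun u => ?_⟩
    · rw [hcomp, neg_add_cancel, theta_zero]
    · rw [hcomp, add_neg_cancel, theta_zero]
  exact ⟨fun x => ⟨hbij x, hone x, hmul x, hadd x, hsmul x⟩, hcomp,
    fun n u => ⟨theta_nat n u, hneg n u⟩⟩
end

section
/- Let $\mathfrak{G}$ be a Lie algebra with root decomposition over Cartan subalgebra $\mathfrak{H}$, and let $M$ be a weight module. Suppose $N \subseteq M$ is a nonzero submodule and that for every real root $\alpha$, the root vector $e_\alpha$ acts on $M$ either locally nilpotently or injectively. Then for each real root $\alpha$: $e_\alpha$ acts locally nilpotently on $N$ if and only if it does so on $M$, and $e_\alpha$ acts injectively on $N$ if and only if it does so on $M$. -/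
lemma shadow_aux_zero {L M : Type*} [LieRing L]
    [AddCommGroup M] [LieRingModule L M] (x : L) (k : ℕ) :
    (fun y : M => ⁅x, y⁆)^[k] 0 = 0 := by
  induction k with
  | zero => rfl
  | succ j ih => rw [Function.iterate_succ_apply', ih, lie_zero]

lemma shadow_aux_mem {F L M : Type*} [Field F] [LieRing L] [LieAlgebra F L]
    [AddCommGroup M] [Module F M] [LieRingModule L M] [LieModule F L M]
    (x : L) (N : LieSubmodule F L M) {m : M} (hm : m ∈ N) (k : ℕ) :
    (fun y : M => ⁅x, y⁆)^[k] m ∈ N := by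
  induction k with
  | zero => simpa using hm
  | succ k ih =>
    rw [Function.iterate_succ_apply']
    exact N.lie_mem ih

/- STATEMENT 16: if every real root vector `e_α` acts on the weight module `M` either
locally nilpotently or injectively, then a nonzero submodule `N ⊆ M` has the same
shadow: `e_α` is locally nilpotent on `N` iff it is on `M`, and injective on `N` iff
it is on `M`. -/
theorem shadow_of_submodule {F L M : Type*} [Field F] [LieRing L] [LieAlgebra F L]
    [AddCommGroup M] [Module F M] [LieRingModule L M] [LieModule F L M]
    {ι : Type*} (e : ι → L)
    (N : LieSubmodule F L M) (hN : N ≠ ⊥)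
    (hdich : ∀ α : ι,
      (∀ m : M, ∃ k : ℕ, (fun x : M => ⁅e α, x⁆)^[k] m = 0) ∨
      Function.Injective fun m : M => ⁅e α, m⁆) :
    ∀ α : ι,
      ((∀ m ∈ N, ∃ k : ℕ, (fun x : M => ⁅e α, x⁆)^[k] m = 0) ↔
        (∀ m : M, ∃ k : ℕ, (fun x : M => ⁅e α, x⁆)^[k] m = 0)) ∧
      ((∀ m ∈ N, ⁅e α, m⁆ = 0 → m = 0) ↔
        Function.Injective fun m : M => ⁅e α, m⁆) := by
  intro α
  obtain ⟨n, hnN, hn0⟩ : ∃ n : M, n ∈ N ∧ n ≠ 0 := by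
    rcases (LieSubmodule.nontrivial_iff_ne_bot F L M).mpr hN with h
    obtain ⟨⟨a, ha⟩, ⟨b, hb⟩, hab⟩ := h
    by_cases h0 : a = 0
    · exact ⟨b, hb, fun hb0 => hab (by simp [Subtype.ext_iff, h0, hb0])⟩
    · exact ⟨a, ha, h0⟩
  have hinj_zero : (Function.Injective fun m : M => ⁅e α, m⁆) ↔
      ∀ m : M, ⁅e α, m⁆ = 0 → m = 0 := by
    constructor
    · intro h m hm
      exact h (by simpa using hm)
    · intro h a b hab
      have : ⁅e α, a - b⁆ = 0 := by
        simp only at hab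
        rw [lie_sub, hab, sub_self]
      have := h _ this
      exact sub_eq_zero.mp this
  constructor
  · constructor
    · intro h
      rcases hdich α with hM | hM
      · exact hM
      · exfalso
        obtain ⟨k, hk⟩ := h n hnN
        have : n = 0 := by
          have hik : Function.Injective ((fun x : M => ⁅e α, x⁆)^[k]) :=
            Function.Injective.iterate hM k
          have : (fun x : M => ⁅e α, x⁆)^[k] n = (fun x : M => ⁅e α, x⁆)^[k] 0 := by
            rw [hk, shadow_aux_zero]
          exact hik this
        exact hn0 this
    · intro h m _
      exact h m
  · constructor
    · intro h
      rcases hdich α with hM | hM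
      · exfalso
        -- find minimal k with iterate zero on n
        obtain ⟨k, hk⟩ := hM n
        have hex : ∃ k, (fun x : M => ⁅e α, x⁆)^[k] n = 0 := ⟨k, hk⟩
        classical
        let k0 := Nat.find hex
        have hk0 : (fun x : M => ⁅e α, x⁆)^[k0] n = 0 := Nat.find_spec hex
        have hk0pos : k0 ≠ 0 := by
          intro h0
          apply hn0
          simpa [h0] using hk0
        obtain ⟨j, hj⟩ := Nat.exists_eq_succ_of_ne_zero hk0pos
        have hjlt : (fun x : M => ⁅e α, x⁆)^[j] n ≠ 0 :=
          Nat.find_min hex (by omega)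
        have hmem : (fun x : M => ⁅e α, x⁆)^[j] n ∈ N := shadow_aux_mem (e α) N hnN j
        have hbr : ⁅e α, (fun x : M => ⁅e α, x⁆)^[j] n⁆ = 0 := by
          have := hk0
          rw [hj, Function.iterate_succ_apply'] at this
          exact this
        exact hjlt (h _ hmem hbr)
      · exact hM
    · intro h m _ hm
      exact hinj_zero.mp h m hm
end

section
/- Let $\mathbb{F}$ be a field of characteristic $0$, $U$ an associative $\mathbb{F}$-algebra, $f \in U$ invertible with $\mathrm{ad}(f)$ locally nilpotent, and let $M$ be a $U$-module. For $x \in \mathbb{F}$ let $\Phi^x M$ be $M$ with action $u \cdot v^x := (\Theta_x(u) v)^x$, $\Theta_x(u) = \sum_i \binom{x}{i}\mathrm{ad}(f)^i(u)f^{-i}$. Then $\Phi^x M$ is a well-defined $U$-module and $\Phi^x(\Phi^y M) \cong \Phi^{x+y} M$; in particular $\Phi^x \circ \Phi^{-x} \cong \mathrm{Id}$ and $\Phi^n M \cong M$ for $n \in \mathbb{Z}$. -/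
/-!
For natural `n`, writing left multiplication by `f` as `ad f + (right multiplication by f)`, two
commuting operators, the binomial theorem gives `fⁿ u f⁻ⁿ = ∑ᵢ (n choose i) ad(f)ⁱ(u) f⁻ⁱ`, so
`Θₙ u = fⁿ u f⁻ⁿ`. Since `ad f` is locally nilpotent, `x ↦ Θₓ u` is a finite sum
`∑ pᵢ(x) • vᵢ` with polynomial coefficients, and such maps, as well as their products and shifts,
are determined by their values at the natural numbers (characteristic `0`; test against linear
functionals). Hence every identity that holds for conjugation by `fⁿ` holds for all `Θₓ`.
-/

open Finset Polynomial

theorem pow_mul_eq_sum_choose_smul {A : Type*} [Ring A] (a u : A) (n : ℕ) :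
    a ^ n * u = ∑ i ∈ range (n + 1),
      n.choose i • ((fun w => a * w - w * a)^[i] u * a ^ (n - i)) := by
  set ad : Module.End ℤ A := LinearMap.mulLeft ℤ a - LinearMap.mulRight ℤ a
  have hcomm : Commute ad (LinearMap.mulRight ℤ a) :=
    (LinearMap.commute_mulLeft_right a a).sub_left (Commute.refl _)
  calc a ^ n * u = ((ad + LinearMap.mulRight ℤ a) ^ n) u := by
        rw [sub_add_cancel, LinearMap.pow_mulLeft, LinearMap.mulLeft_apply]
    _ = _ := by
        rw [hcomm.add_pow, LinearMap.sum_apply]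
        refine sum_congr rfl fun i _ => ?_
        rw [(hcomm.pow_pow _ _).eq, Module.End.mul_apply, Module.End.mul_apply,
          Module.End.natCast_apply, map_nsmul, LinearMap.pow_mulRight, LinearMap.mulRight_apply,
          smul_mul_assoc, Module.End.pow_apply]
        rfl

section PolyMaps

variable (F V : Type*)

def polyMaps [CommSemiring F] [AddCommMonoid V] [Module F V] : Submodule F (F → V) :=
  Submodule.span F {φ | ∃ (p : F[X]) (v : V), φ = fun x => p.eval x • v}

variable {F V}

namespace polyMaps

section CommSemiring

variable [CommSemiring F] [AddCommMonoid V] [Module F V]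

theorem eval_smul_mem (p : F[X]) (v : V) : (fun x => p.eval x • v) ∈ polyMaps F V :=
  Submodule.subset_span ⟨p, v, rfl⟩

theorem comp_add_const_mem {φ : F → V} (hφ : φ ∈ polyMaps F V) (y : F) :
    (fun x => φ (x + y)) ∈ polyMaps F V := by
  have hle : polyMaps F V ≤ (polyMaps F V).comap (LinearMap.funLeft F V (· + y)) := by
    refine Submodule.span_le.mpr ?_
    rintro _ ⟨p, v, rfl⟩
    change (fun x => p.eval (x + y) • v) ∈ polyMaps F V
    convert eval_smul_mem (p.comp (X + C y)) v using 3
    simp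
  exact hle hφ

theorem linearMap_comp_mem {W : Type*} [AddCommMonoid W] [Module F W] (L : V →ₗ[F] W)
    {φ : F → V} (hφ : φ ∈ polyMaps F V) : (fun x => L (φ x)) ∈ polyMaps F W := by
  have hle : polyMaps F V ≤ (polyMaps F W).comap (L.compLeft F) := by
    refine Submodule.span_le.mpr ?_
    rintro _ ⟨p, v, rfl⟩
    change (fun x => L (p.eval x • v)) ∈ polyMaps F W
    simpa using eval_smul_mem p (L v)
  exact hle hφ

theorem mul_mem {A : Type*} [Semiring A] [Algebra F A] {φ ψ : F → A}
    (hφ : φ ∈ polyMaps F A) (hψ : ψ ∈ polyMaps F A) : φ * ψ ∈ polyMaps F A := by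
  have hle : polyMaps F A * polyMaps F A ≤ polyMaps F A := by
    rw [polyMaps, Submodule.span_mul_span]
    refine Submodule.span_mono ?_
    rintro _ ⟨_, ⟨p, a, rfl⟩, _, ⟨q, b, rfl⟩, rfl⟩
    refine ⟨p * q, a * b, ?_⟩
    funext x
    simp [smul_smul, mul_comm]
  exact hle (Submodule.mul_mem_mul hφ hψ)

end CommSemiring

theorem exists_dual_apply_eq_eval [CommRing F] [AddCommGroup V] [Module F V] {φ : F → V}
    (hφ : φ ∈ polyMaps F V) (ℓ : Module.Dual F V) : ∃ p : F[X], ∀ x, ℓ (φ x) = p.eval x := by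
  induction hφ using Submodule.span_induction with
  | mem _ h =>
    obtain ⟨p, v, rfl⟩ := h
    exact ⟨C (ℓ v) * p, fun x => by simp [mul_comm]⟩
  | zero => exact ⟨0, by simp⟩
  | add φ ψ _ _ hφ hψ =>
    obtain ⟨p, hp⟩ := hφ
    obtain ⟨q, hq⟩ := hψ
    exact ⟨p + q, fun x => by simp [hp, hq]⟩
  | smul c φ _ hφ =>
    obtain ⟨p, hp⟩ := hφ
    exact ⟨C c * p, fun x => by simp [hp]⟩

theorem eq_of_forall_natCast [Field F] [CharZero F] [AddCommGroup V] [Module F V]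
    {φ ψ : F → V} (hφ : φ ∈ polyMaps F V) (hψ : ψ ∈ polyMaps F V)
    (h : ∀ n : ℕ, φ n = ψ n) : φ = ψ := by
  funext x
  rw [← sub_eq_zero, ← Module.forall_dual_apply_eq_zero_iff F]
  intro ℓ
  obtain ⟨p, hp⟩ := exists_dual_apply_eq_eval (sub_mem hφ hψ) ℓ
  have hp0 : p = 0 := by
    refine p.eq_zero_of_infinite_isRoot (Set.infinite_of_injective_forall_mem
      Nat.cast_injective fun n => ?_)
    simp [IsRoot, ← hp, h n]
  simpa [hp0] using hp x

end polyMaps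

end PolyMaps

theorem prod_range_natCast_sub_div_factorial {F : Type*} [Field F] [CharZero F] (n i : ℕ) :
    (∏ j ∈ range i, ((n : F) - j)) / (Nat.factorial i : F) = n.choose i := by
  rw [← descPochhammer_eval_eq_prod_range, descPochhammer_eval_eq_descFactorial,
    Nat.descFactorial_eq_factorial_mul_choose, Nat.cast_mul,
    mul_div_cancel_left₀ _ (Nat.cast_ne_zero.mpr i.factorial_ne_zero)]

section BinomialConjugation

variable {F U : Type*} [Field F] [Ring U] [Algebra F U]

def IsBinomialConjugation (f g : U) (Θ : F → U → U) : Prop :=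
  ∀ (x : F) (u : U) (k : ℕ), (fun w => f * w - w * f)^[k] u = 0 →
    Θ x u = ∑ i ∈ range k, ((∏ j ∈ range i, (x - (j : F))) / (Nat.factorial i : F)) •
      ((fun w => f * w - w * f)^[i] u * g ^ i)

namespace IsBinomialConjugation

variable {f g : U} {Θ : F → U → U}

theorem mem_polyMaps (hΘ : IsBinomialConjugation f g Θ) {u : U} {k : ℕ}
    (hu : (fun w => f * w - w * f)^[k] u = 0) : (fun x => Θ x u) ∈ polyMaps F U := by
  have hsum : (fun x => Θ x u) = ∑ i ∈ range k, fun x =>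
      (C (Nat.factorial i : F)⁻¹ * descPochhammer F i).eval x •
        ((fun w => f * w - w * f)^[i] u * g ^ i) := by
    funext x
    rw [hΘ x u k hu, Finset.sum_apply]
    simp [descPochhammer_eval_eq_prod_range, div_eq_inv_mul]
  rw [hsum]
  exact sum_mem fun i _ => polyMaps.eval_smul_mem _ _

theorem map_one (hΘ : IsBinomialConjugation f g Θ) (x : F) : Θ x 1 = 1 := by
  simpa using hΘ x 1 1

variable [CharZero F]

theorem apply_natCast (hΘ : IsBinomialConjugation f g Θ) (hfg : f * g = 1) {u : U}
    {k : ℕ} (hu : (fun w => f * w - w * f)^[k] u = 0) (n : ℕ) : Θ n u = f ^ n * u * g ^ n := by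
  have hu' : (fun w => f * w - w * f)^[n + 1 + k] u = 0 := by
    rw [Function.iterate_add_apply, hu]
    exact Function.iterate_fixed (by simp) _
  rw [hΘ n u _ hu', sum_range_add, pow_mul_eq_sum_choose_smul, sum_mul]
  have htail : ∀ i ∈ range k,
      ((∏ j ∈ range (n + 1 + i), ((n : F) - j)) / (Nat.factorial (n + 1 + i) : F)) •
        ((fun w => f * w - w * f)^[n + 1 + i] u * g ^ (n + 1 + i)) = 0 := fun i _ => by
    rw [prod_range_natCast_sub_div_factorial, Nat.choose_eq_zero_of_lt (by omega), Nat.cast_zero,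
      zero_smul]
  rw [sum_eq_zero htail, add_zero]
  refine sum_congr rfl fun i hi => ?_
  rw [prod_range_natCast_sub_div_factorial, Nat.cast_smul_eq_nsmul, smul_mul_assoc, mul_assoc,
    ← pow_sub_mul_pow g (Nat.le_of_lt_succ (mem_range.mp hi)), ← mul_assoc (f ^ (n - i)),
    pow_mul_pow_eq_one _ hfg, one_mul]

theorem apply_add_natCast (hΘ : IsBinomialConjugation f g Θ) (hfg : f * g = 1) {u : U} {k : ℕ}
    (hu : (fun w => f * w - w * f)^[k] u = 0) (y : F) (n : ℕ) :
    Θ (y + n) u = f ^ n * Θ y u * g ^ n := by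
  refine congrFun (polyMaps.eq_of_forall_natCast
    (polyMaps.comp_add_const_mem (hΘ.mem_polyMaps hu) n)
    (polyMaps.linearMap_comp_mem (LinearMap.mulLeftRight F (f ^ n, g ^ n)) (hΘ.mem_polyMaps hu))
    fun m => ?_) y
  simp only [LinearMap.mulLeftRight_apply]
  rw [← Nat.cast_add, hΘ.apply_natCast hfg hu, hΘ.apply_natCast hfg hu, pow_add, pow_add,
    pow_mul_comm f m n]
  simp only [mul_assoc]

theorem apply_zero (hΘ : IsBinomialConjugation f g Θ) (hfg : f * g = 1) {u : U} {k : ℕ}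
    (hu : (fun w => f * w - w * f)^[k] u = 0) : Θ 0 u = u := by
  simpa using hΘ.apply_natCast hfg hu 0

theorem map_add (hΘ : IsBinomialConjugation f g Θ) (hfg : f * g = 1)
    (hnil : ∀ u : U, ∃ k : ℕ, (fun w => f * w - w * f)^[k] u = 0) (x : F) (u v : U) :
    Θ x (u + v) = Θ x u + Θ x v := by
  obtain ⟨a, hu⟩ := hnil u
  obtain ⟨b, hv⟩ := hnil v
  obtain ⟨c, huv⟩ := hnil (u + v)
  refine congrFun (polyMaps.eq_of_forall_natCast (hΘ.mem_polyMaps huv)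
    (add_mem (hΘ.mem_polyMaps hu) (hΘ.mem_polyMaps hv)) fun n => ?_) x
  rw [Pi.add_apply, hΘ.apply_natCast hfg huv, hΘ.apply_natCast hfg hu, hΘ.apply_natCast hfg hv,
    mul_add, add_mul]

theorem map_mul (hΘ : IsBinomialConjugation f g Θ) (hfg : f * g = 1) (hgf : g * f = 1)
    (hnil : ∀ u : U, ∃ k : ℕ, (fun w => f * w - w * f)^[k] u = 0) (x : F) (u v : U) :
    Θ x (u * v) = Θ x u * Θ x v := by
  obtain ⟨a, hu⟩ := hnil u
  obtain ⟨b, hv⟩ := hnil v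
  obtain ⟨c, huv⟩ := hnil (u * v)
  refine congrFun (polyMaps.eq_of_forall_natCast (hΘ.mem_polyMaps huv)
    (polyMaps.mul_mem (hΘ.mem_polyMaps hu) (hΘ.mem_polyMaps hv)) fun n => ?_) x
  rw [Pi.mul_apply, hΘ.apply_natCast hfg huv, hΘ.apply_natCast hfg hu, hΘ.apply_natCast hfg hv]
  calc f ^ n * (u * v) * g ^ n = f ^ n * u * (g ^ n * f ^ n) * v * g ^ n := by
        rw [pow_mul_pow_eq_one n hgf, mul_one]
        simp only [mul_assoc]
    _ = f ^ n * u * g ^ n * (f ^ n * v * g ^ n) := by simp only [mul_assoc]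

theorem apply_apply (hΘ : IsBinomialConjugation f g Θ) (hfg : f * g = 1)
    (hnil : ∀ u : U, ∃ k : ℕ, (fun w => f * w - w * f)^[k] u = 0) (x y : F) (u : U) :
    Θ x (Θ y u) = Θ (x + y) u := by
  obtain ⟨a, hu⟩ := hnil u
  obtain ⟨b, hΘu⟩ := hnil (Θ y u)
  refine congrFun (polyMaps.eq_of_forall_natCast (hΘ.mem_polyMaps hΘu)
    (polyMaps.comp_add_const_mem (hΘ.mem_polyMaps hu) y) fun n => ?_) x
  rw [hΘ.apply_natCast hfg hΘu, add_comm, hΘ.apply_add_natCast hfg hu]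

theorem pow_mul_apply_natCast (hΘ : IsBinomialConjugation f g Θ) (hfg : f * g = 1)
    (hgf : g * f = 1) {u : U} {k : ℕ} (hu : (fun w => f * w - w * f)^[k] u = 0) (n : ℕ) :
    g ^ n * Θ n u = u * g ^ n := by
  rw [hΘ.apply_natCast hfg hu, ← mul_assoc, ← mul_assoc, pow_mul_pow_eq_one n hgf, one_mul]

theorem pow_mul_apply_neg_natCast (hΘ : IsBinomialConjugation f g Θ) (hfg : f * g = 1)
    (hgf : g * f = 1) {u : U} {k : ℕ} (hu : (fun w => f * w - w * f)^[k] u = 0) (n : ℕ) :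
    f ^ n * Θ (-n) u = u * f ^ n := by
  have h := hΘ.apply_add_natCast hfg hu (-n) n
  rw [neg_add_cancel, hΘ.apply_zero hfg hu] at h
  calc f ^ n * Θ (-n) u = f ^ n * Θ (-n) u * (g ^ n * f ^ n) := by
        rw [pow_mul_pow_eq_one n hgf, mul_one]
    _ = u * f ^ n := by rw [← mul_assoc, ← h]

end IsBinomialConjugation

end BinomialConjugation

theorem twisted_module_well_defined {F U M : Type*} [Field F] [CharZero F]
    [Ring U] [Algebra F U] [AddCommGroup M] [Module U M]
    (f g : U) (hfg : f * g = 1) (hgf : g * f = 1)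
    (hnil : ∀ u : U, ∃ k : ℕ, (fun w => f * w - w * f)^[k] u = 0)
    (Θ : F → U → U)
    (hΘ : ∀ (x : F) (u : U) (k : ℕ), (fun w => f * w - w * f)^[k] u = 0 →
      Θ x u = ∑ i ∈ Finset.range k,
        ((∏ j ∈ Finset.range i, (x - (j : F))) / (Nat.factorial i : F)) •
          ((fun w => f * w - w * f)^[i] u * g ^ i)) :
    (∀ (x : F) (u v : U) (m : M), Θ x (u * v) • m = Θ x u • (Θ x v • m)) ∧
    (∀ (x : F) (m : M), Θ x (1 : U) • m = m) ∧
    (∀ (x : F) (u v : U) (m : M), Θ x (u + v) • m = Θ x u • m + Θ x v • m) ∧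
    (∀ (x y : F) (u : U) (m : M), Θ x (Θ y u) • m = Θ (x + y) u • m) ∧
    (∀ (n : ℕ) (u : U) (m : M),
      g ^ n • (Θ (n : F) u • m) = u • (g ^ n • m) ∧
      f ^ n • (Θ (-(n : F)) u • m) = u • (f ^ n • m)) := by
  have hΘ' : IsBinomialConjugation f g Θ := hΘ
  refine ⟨fun x u v m => ?_, fun x m => ?_, fun x u v m => ?_, fun x y u m => ?_,
    fun n u m => ?_⟩
  · rw [hΘ'.map_mul hfg hgf hnil, mul_smul]
  · rw [hΘ'.map_one, one_smul]
  · rw [hΘ'.map_add hfg hnil, add_smul]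
  · rw [hΘ'.apply_apply hfg hnil]
  · obtain ⟨k, hu⟩ := hnil u
    rw [← mul_smul, ← mul_smul, ← mul_smul, ← mul_smul, hΘ'.pow_mul_apply_natCast hfg hgf hu,
      hΘ'.pow_mul_apply_neg_natCast hfg hgf hu]
    exact ⟨rfl, rfl⟩
end
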